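/- Let r > 0 and consider points in ℝ × {0, r} with Euclidean distance. Suppose x < y with y − x ≤ r, ι_x, ι_y ∈ {0, r} with ι_x ≠ ι_y, and let p be a point of ℝ × {0,r} with first coordinate less than x, and q a point with first coordinate greater than y. Then min(d(p,(x,ι_x)), d(p,(y,ι_y))) < d(p,q). -/

import Mathlib

/-! The point `p` lies on the same line as one of the two given points, so its distance to that
point is purely horizontal, and `q` lies horizontally further from `p` than either of them. -/

theorem eq_or_eq_of_mem_pair_of_ne {α : Type*} {u v a b c : α} (ha : a ∈ ({u, v} : Set α))
    (hb : b ∈ ({u, v} : Set α)) (hc : c ∈ ({u, v} : Set α)) (hbc : b ≠ c) : a = b ∨ a = c := by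
  simp only [Set.mem_insert_iff, Set.mem_singleton_iff] at ha hb hc
  rcases ha with rfl | rfl <;> rcases hb with rfl | rfl <;> rcases hc with rfl | rfl <;> simp_all

theorem Real.lt_sqrt_sq_add_sq_of_lt {a c : ℝ} (h : a < c) (d : ℝ) : a < √(c ^ 2 + d ^ 2) :=
  calc a < |c| := h.trans_le (le_abs_self c)
    _ = √(c ^ 2) := (Real.sqrt_sq_eq_abs c).symm
    _ ≤ √(c ^ 2 + d ^ 2) := Real.sqrt_le_sqrt (le_add_of_nonneg_right (sq_nonneg d))

theorem stmt11_general (r : ℝ) (x y ιx ιy : ℝ)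
    (hιx : ιx ∈ ({0, r} : Set ℝ)) (hιy : ιy ∈ ({0, r} : Set ℝ)) (hne : ιx ≠ ιy)
    (hxy : x < y)
    (p q : ℝ × ℝ) (hp2 : p.2 ∈ ({0, r} : Set ℝ))
    (hp : p.1 < x) (hq : q.1 > y) :
    min (Real.sqrt ((x - p.1) ^ 2 + (ιx - p.2) ^ 2))
        (Real.sqrt ((y - p.1) ^ 2 + (ιy - p.2) ^ 2))
      < Real.sqrt ((q.1 - p.1) ^ 2 + (q.2 - p.2) ^ 2) := by
  have same_line_lt : ∀ z ι, ι = p.2 → p.1 < z → z < q.1 →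
      √((z - p.1) ^ 2 + (ι - p.2) ^ 2) < √((q.1 - p.1) ^ 2 + (q.2 - p.2) ^ 2) := by
    rintro z ι rfl hpz hzq
    rw [sub_self, zero_pow two_ne_zero, add_zero, Real.sqrt_sq (sub_pos.2 hpz).le]
    exact Real.lt_sqrt_sq_add_sq_of_lt (by linarith) _
  rcases eq_or_eq_of_mem_pair_of_ne hp2 hιx hιy hne with h | h
  · exact (min_le_left _ _).trans_lt (same_line_lt x ιx h.symm hp (by linarith))
  · exact (min_le_right _ _).trans_lt (same_line_lt y ιy h.symm (by linarith) hq)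

/-- If two points at horizontal positions x < y, y − x ≤ r, lie on different
lines of ℝ × {0,r}, then any point p strictly to the left of x is strictly closer to one of
them than to any point q strictly to the right of y. -/
theorem stmt11 (r : ℝ) (hr : 0 < r) (x y ιx ιy : ℝ)
    (hιx : ιx ∈ ({0, r} : Set ℝ)) (hιy : ιy ∈ ({0, r} : Set ℝ)) (hne : ιx ≠ ιy)
    (hxy : x < y) (hclose : y - x ≤ r)
    (p q : ℝ × ℝ) (hp2 : p.2 ∈ ({0, r} : Set ℝ)) (hq2 : q.2 ∈ ({0, r} : Set ℝ))
    (hp : p.1 < x) (hq : q.1 > y) :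
    min (Real.sqrt ((x - p.1) ^ 2 + (ιx - p.2) ^ 2))
        (Real.sqrt ((y - p.1) ^ 2 + (ιy - p.2) ^ 2))
      < Real.sqrt ((q.1 - p.1) ^ 2 + (q.2 - p.2) ^ 2) :=
  stmt11_general r x y ιx ιy hιx hιy hne hxy p q hp2 hp hq
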